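/- Let L be a right Bol loop in which for all x, y, z ∈ L, either D'(x,y,z) or E'(x,y,z) holds (D': (xy)z = x(yz) and (xz)y = x(zy); E': (xy)z = x(zy) and (xz)y = x(yz)). Then L is an extra loop: it satisfies the identity ((xy)z)x = x(y(zx)) for all x, y, z. -/

import Mathlib

/-!
Applying the `D'`/`E'` dichotomy to `a, b, a` and `a⁻¹, a, a * b` shows that the loop is flexible,
hence has the left and antiautomorphic inverse properties, is also left Bol and satisfies the middle
Moufang identity. For a triple, `D'` amounts to associativity, and associating triples are closed
under permutation. Squares are nuclear: if `x * x, y, z` does not associate then neither does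
`x, y, z`, and `E'` for both triples makes `x, x * y, z` associate; the middle Moufang identity then
forces `y * z = z * y`, which turns `E'(x, y, z)` into `D'(x, y, z)`. With nuclear squares the right
Bol identity for `((x * y) * x⁻¹) * x` and the left Bol identity for `x * (x⁻¹ * (z * x))` give the
two sides of the extra law.
-/

structure IsRightBolLoop (L : Type*) [Mul L] [One L] [Inv L] : Prop where
  one_mul : ∀ a : L, 1 * a = a
  existsUnique_mul_left : ∀ a b : L, ∃! x : L, a * x = b
  existsUnique_mul_right : ∀ a b : L, ∃! y : L, y * a = b
  mul_inv_cancel : ∀ a : L, a * a⁻¹ = 1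
  inv_mul_cancel : ∀ a : L, a⁻¹ * a = 1
  bol : ∀ x y z : L, x * y * z * y = x * (y * z * y)

/-- Every triple satisfies `D'` (first disjunct) or `E'` (second disjunct). -/
structure IsDOrERightBolLoop (L : Type*) [Mul L] [One L] [Inv L] : Prop
    extends IsRightBolLoop L where
  d_or_e : ∀ x y z : L,
    (x * y * z = x * (y * z) ∧ x * z * y = x * (z * y)) ∨
    (x * y * z = x * (z * y) ∧ x * z * y = x * (y * z))

section

variable {L : Type*} [Mul L] [One L] [Inv L]

def AssocTriple (a b c : L) : Prop := a * b * c = a * (b * c)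

namespace IsRightBolLoop

theorem mul_left_cancel (hL : IsRightBolLoop L) {a b c : L} (h : a * b = a * c) : b = c :=
  (hL.existsUnique_mul_left a (a * c)).unique h rfl

theorem mul_right_cancel (hL : IsRightBolLoop L) {a b c : L} (h : b * a = c * a) : b = c :=
  (hL.existsUnique_mul_right a (c * a)).unique h rfl

theorem mul_inv_cancel_right (hL : IsRightBolLoop L) (a b : L) : a * b * b⁻¹ = a :=
  hL.mul_right_cancel <| by rw [hL.bol, hL.mul_inv_cancel, hL.one_mul]

theorem inv_inv (hL : IsRightBolLoop L) (a : L) : a⁻¹⁻¹ = a :=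
  hL.mul_left_cancel <| (hL.mul_inv_cancel a⁻¹).trans (hL.inv_mul_cancel a).symm

theorem inv_mul_cancel_right (hL : IsRightBolLoop L) (a b : L) : a * b⁻¹ * b = a := by
  simpa only [hL.inv_inv] using hL.mul_inv_cancel_right a b⁻¹

theorem inv_mul_mul_mul_cancel_left (hL : IsRightBolLoop L) (a b : L) :
    a⁻¹ * (a * b * a) = b * a := by
  rw [← hL.bol, hL.inv_mul_cancel, hL.one_mul]

theorem assocTriple_mul_middle (hL : IsRightBolLoop L) {a b c : L} (h : AssocTriple a b c) :
    AssocTriple a (b * c) b := by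
  rw [AssocTriple, ← h, hL.bol]

end IsRightBolLoop

namespace IsDOrERightBolLoop

theorem assocTriple_of_commute (hL : IsDOrERightBolLoop L) (a : L) {b c : L}
    (h : b * c = c * b) : AssocTriple a b c := by
  rcases hL.d_or_e a b c with ⟨hD, -⟩ | ⟨hE, -⟩
  · exact hD
  · rw [AssocTriple, hE, h]

theorem eq_mul_swap_of_not_assocTriple (hL : IsDOrERightBolLoop L) {a b c : L}
    (h : ¬ AssocTriple a b c) : a * b * c = a * (c * b) := by
  rcases hL.d_or_e a b c with ⟨hD, -⟩ | ⟨hE, -⟩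
  · exact absurd hD h
  · exact hE

theorem flexible (hL : IsDOrERightBolLoop L) (a b : L) : a * b * a = a * (b * a) := by
  rcases hL.d_or_e a b a with ⟨hD, -⟩ | ⟨hE, -⟩
  · exact hD
  · -- `E'(a, b, a)` says that `a` commutes with `a * b`, so `a⁻¹, a, a * b` associate
    have hcomm : a * b = b * a := by
      have h := hL.assocTriple_of_commute a⁻¹ hE.symm
      rwa [AssocTriple, hL.inv_mul_cancel, hL.one_mul, ← hE,
        hL.inv_mul_mul_mul_cancel_left] at h
    rw [hE, hcomm]

theorem left_alternative (hL : IsDOrERightBolLoop L) (a b : L) : a * a * b = a * (a * b) := by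
  rcases hL.d_or_e a a b with ⟨hD, -⟩ | ⟨hE, hE'⟩
  · exact hD
  · have hcomm : b * a = a * b := hL.mul_left_cancel ((hL.flexible a b).symm.trans hE')
    rw [hE, hcomm]

theorem inv_mul_cancel_left (hL : IsDOrERightBolLoop L) (a b : L) : a⁻¹ * (a * b) = b := by
  obtain ⟨c, rfl, -⟩ := hL.existsUnique_mul_right a b
  rw [← hL.flexible, hL.inv_mul_mul_mul_cancel_left]

theorem mul_inv_cancel_left (hL : IsDOrERightBolLoop L) (a b : L) : a * (a⁻¹ * b) = b := by
  simpa only [hL.inv_inv] using hL.inv_mul_cancel_left a⁻¹ b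

theorem mul_inv_rev (hL : IsDOrERightBolLoop L) (a b : L) : (a * b)⁻¹ = b⁻¹ * a⁻¹ := by
  have h : b * (a * b)⁻¹ = a⁻¹ := by
    simpa only [hL.inv_mul_cancel_left] using hL.mul_inv_cancel_right a⁻¹ (a * b)
  rw [← h, hL.inv_mul_cancel_left]

theorem left_bol (hL : IsDOrERightBolLoop L) (a b c : L) : a * b * a * c = a * (b * (a * c)) := by
  have h := congrArg (·⁻¹) (hL.bol c⁻¹ a⁻¹ b⁻¹)
  simp only [hL.mul_inv_rev, hL.inv_inv] at h
  rw [hL.flexible]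
  exact h.symm

theorem mul_mul_inv_assoc (hL : IsDOrERightBolLoop L) (a b : L) : a * (b * a⁻¹) = a * b * a⁻¹ := by
  conv_rhs => rw [← hL.inv_mul_cancel_right b a, ← hL.flexible, hL.mul_inv_cancel_right]

theorem middle_moufang (hL : IsDOrERightBolLoop L) (x y z : L) :
    x * y * (z * x) = x * (y * z) * x := by
  set w := x⁻¹ * (z * x) * x⁻¹
  have hw : x * w = z := by
    rw [hL.mul_mul_inv_assoc, hL.mul_inv_cancel_left, hL.mul_inv_cancel_right]
  have hzx : x * (w * x) = z * x := by
    rw [hL.inv_mul_cancel_right, hL.mul_inv_cancel_left]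
  rw [← hzx, ← hL.flexible, ← hL.bol, hL.left_bol, hw]

theorem assocTriple_swap (hL : IsDOrERightBolLoop L) {a b c : L} (h : AssocTriple a b c) :
    AssocTriple a c b := by
  rcases hL.d_or_e a b c with ⟨-, hD⟩ | ⟨hE, -⟩
  · exact hD
  · exact hL.assocTriple_of_commute a (hL.mul_left_cancel (hE.symm.trans h))

theorem assocTriple_inv_rev (hL : IsDOrERightBolLoop L) {a b c : L} (h : AssocTriple a b c) :
    AssocTriple c⁻¹ b⁻¹ a⁻¹ := by
  have h' := congrArg (·⁻¹) h
  simp only [hL.mul_inv_rev] at h'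
  exact h'.symm

theorem assocTriple_rotate (hL : IsDOrERightBolLoop L) {a b c : L} (h : AssocTriple a b c) :
    AssocTriple c a b := by
  simpa only [hL.inv_inv] using
    hL.assocTriple_inv_rev (hL.assocTriple_swap (hL.assocTriple_inv_rev (hL.assocTriple_swap h)))

theorem assocTriple_mul_left (hL : IsDOrERightBolLoop L) {x y z : L} (h : AssocTriple x y z) :
    AssocTriple x (x * y) z :=
  hL.assocTriple_swap <| hL.assocTriple_rotate <|
    hL.assocTriple_mul_middle (hL.assocTriple_rotate h)

theorem commute_of_assocTriple_mul_left (hL : IsDOrERightBolLoop L) {x y z : L}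
    (h : AssocTriple x (x * y) z) (hE : x * y * z = x * (z * y)) : y * z = z * y := by
  have h' := hL.assocTriple_rotate (hL.assocTriple_rotate h)
  rw [AssocTriple, hL.middle_moufang, hE] at h'
  exact (hL.mul_left_cancel (hL.mul_right_cancel h')).symm

theorem assocTriple_mul_self_left (hL : IsDOrERightBolLoop L) (x y z : L) :
    AssocTriple (x * x) y z := by
  by_cases hxyz : AssocTriple x y z
  · have h := hL.assocTriple_mul_left hxyz
    rw [AssocTriple] at h hxyz ⊢
    rw [hL.left_alternative, h, hxyz, hL.left_alternative]
  · by_contra hsq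
    have h : AssocTriple x (x * y) z := by
      rw [AssocTriple, ← hL.left_alternative, hL.eq_mul_swap_of_not_assocTriple hsq,
        hL.left_alternative, hL.eq_mul_swap_of_not_assocTriple hxyz]
    exact hxyz (hL.assocTriple_of_commute x
      (hL.commute_of_assocTriple_mul_left h (hL.eq_mul_swap_of_not_assocTriple hxyz)))

theorem mul_inv_mul_mul (hL : IsDOrERightBolLoop L) (p x q : L) :
    p * x⁻¹ * (x * q) = p * x * (x⁻¹ * q) := by
  have hleft : ∀ a b : L, AssocTriple (x * x) a b := hL.assocTriple_mul_self_left x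
  have hmid : ∀ a b : L, AssocTriple a (x * x) b := fun a b =>
    hL.assocTriple_rotate (hleft b a)
  have hright : ∀ a b : L, AssocTriple a b (x * x) := fun a b =>
    hL.assocTriple_rotate (hmid b a)
  calc p * x⁻¹ * (x * q)
      = p * x⁻¹ * (x * x * (x⁻¹ * q)) := by rw [← hleft, hL.mul_inv_cancel_right]
    _ = p * x⁻¹ * (x * x) * (x⁻¹ * q) := (hmid _ _).symm
    _ = p * x * (x⁻¹ * q) := by rw [hright, hL.inv_mul_cancel_left]

theorem extra_law (hL : IsDOrERightBolLoop L) (x y z : L) :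
    x * y * z * x = x * (y * (z * x)) := by
  calc x * y * z * x = x * y * x⁻¹ * x * z * x := by rw [hL.inv_mul_cancel_right]
    _ = x * y * x⁻¹ * (x * (z * x)) := by rw [hL.bol, hL.flexible]
    _ = x * y * x * (x⁻¹ * (z * x)) := hL.mul_inv_mul_mul _ _ _
    _ = x * (y * (z * x)) := by rw [hL.left_bol, hL.mul_inv_cancel_left]

end IsDOrERightBolLoop

end

theorem stmt_17_general {L : Type*} [Mul L] [One L] [Inv L]
    (h1 : ∀ a : L, 1 * a = a)
    (hld : ∀ a b : L, ∃! x : L, a * x = b) (hrd : ∀ a b : L, ∃! y : L, y * a = b)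
    (hinvr : ∀ a : L, a * a⁻¹ = 1) (hinvl : ∀ a : L, a⁻¹ * a = 1)
    (bol : ∀ x y z : L, ((x * y) * z) * y = x * ((y * z) * y))
    (hDE : ∀ x y z : L,
      ((x * y) * z = x * (y * z) ∧ (x * z) * y = x * (z * y)) ∨
      ((x * y) * z = x * (z * y) ∧ (x * z) * y = x * (y * z))) :
    ∀ x y z : L, ((x * y) * z) * x = x * (y * (z * x)) :=
  IsDOrERightBolLoop.extra_law ⟨⟨h1, hld, hrd, hinvr, hinvl, bol⟩, hDE⟩

/-- If each triple of a right Bol loop satisfies D' or E', then the loop is extra. -/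
theorem stmt_17 {L : Type*} [Mul L] [One L] [Inv L]
    (h1 : ∀ a : L, 1 * a = a) (h2 : ∀ a : L, a * 1 = a)
    (hld : ∀ a b : L, ∃! x : L, a * x = b) (hrd : ∀ a b : L, ∃! y : L, y * a = b)
    (hinvr : ∀ a : L, a * a⁻¹ = 1) (hinvl : ∀ a : L, a⁻¹ * a = 1)
    (bol : ∀ x y z : L, ((x * y) * z) * y = x * ((y * z) * y))
    (hDE : ∀ x y z : L,
      ((x * y) * z = x * (y * z) ∧ (x * z) * y = x * (z * y)) ∨
      ((x * y) * z = x * (z * y) ∧ (x * z) * y = x * (y * z))) :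
    ∀ x y z : L, ((x * y) * z) * x = x * (y * (z * x)) :=
  stmt_17_general h1 hld hrd hinvr hinvl bol hDE
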